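/- arXiv:1405.5997 — 3 statements merged into one kernel-verified Lean document; each statement's English description precedes it below -/
import Mathlib

section
/- Let K ≥ 1 be an integer and let 0 < ρ ≤ ρ′. If v is a two-choice profile for (ρ, K) and v′ is a two-choice profile for (ρ′, K), then v_k ≤ v′_k for every 0 ≤ k ≤ K. In particular, for each k the map ρ ↦ ν_{ρ,K}(k) is nondecreasing in ρ. -/
/-!
Summing the recursion gives `v_{i+1} - v_{j+1} = ρ (v_i² - v_j²)` for `i ≤ j ≤ K`, and the
same for `v'` with `ρ'`. If `v_n > v'_n` for some `n`, then, since `v_0 = v'_0` and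
`v_{K+1} = v'_{K+1} = 0`, there are `a ≤ b` with `v_a ≤ v'_a`, `v_{a+1} > v'_{a+1}`,
`v_b > v'_b` and `v_{b+1} ≤ v'_{b+1}`. Then `v_{a+1} - v_{b+1} > v'_{a+1} - v'_{b+1}`, whereas
`ρ (v_a² - v_b²) ≤ ρ (v'_a² - v'_b²) ≤ ρ' (v'_a² - v'_b²)` by monotonicity of `v'`.
-/

open Finset Real

noncomputable section

/-- Extend a vector `v = (v_0, …, v_K) ∈ ℝ^{K+1}` to `ℕ → ℝ` by zero,
implementing the convention `v_{K+1} = 0`. -/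
def extProfile (K : ℕ) (v : Fin (K + 1) → ℝ) : ℕ → ℝ :=
  fun k => if h : k < K + 1 then v ⟨k, h⟩ else 0

/-- `v = (v_0, …, v_K)` is a two-choice profile for `(ρ, K)`:
`1 = v_0 ≥ v_1 ≥ … ≥ v_K ≥ 0` and, with the convention `v_{K+1} = 0`,
`v_k − v_{k+1} = ρ (v_{k−1}² − v_k²)` for every `1 ≤ k ≤ K`. -/
def IsTwoChoiceProfile (ρ : ℝ) (K : ℕ) (v : Fin (K + 1) → ℝ) : Prop :=
  extProfile K v 0 = 1 ∧
  (∀ k < K, extProfile K v (k + 1) ≤ extProfile K v k) ∧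
  0 ≤ extProfile K v K ∧
  ∀ k, 1 ≤ k → k ≤ K →
    extProfile K v k - extProfile K v (k + 1) =
      ρ * ((extProfile K v (k - 1)) ^ 2 - (extProfile K v k) ^ 2)

/-- When it exists, the unique two-choice profile for `(ρ, K)`, denoted `ν_{ρ,K}`. -/
def nu (ρ : ℝ) (K : ℕ) : Fin (K + 1) → ℝ :=
  Classical.epsilon (IsTwoChoiceProfile ρ K)

/-- `ν_{ρ,K}` viewed as a function on `ℕ` (with `ν_{ρ,K}(K+1) = 0`). -/
def nuV (ρ : ℝ) (K : ℕ) : ℕ → ℝ := extProfile K (nu ρ K)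

/-- `P(ρ, K) = (1 − ν_{ρ,K}(1)) + ν_{ρ,K}(K)`, the limiting proportion of
problematic (empty or full) queues. -/
def propProblematic (ρ : ℝ) (K : ℕ) : ℝ := (1 - nuV ρ K 1) + nuV ρ K K

theorem Nat.exists_mem_Ico_and_not_succ {P : ℕ → Prop} {m n : ℕ} (hm : P m) (hn : ¬P n)
    (hmn : m ≤ n) : ∃ k ∈ Ico m n, P k ∧ ¬P (k + 1) := by
  induction n, hmn using Nat.le_induction with
  | base => exact absurd hm hn
  | succ n hmn ih =>
    by_cases hPn : P n
    · exact ⟨n, mem_Ico.2 ⟨hmn, n.lt_succ_self⟩, hPn, hn⟩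
    · obtain ⟨k, hk, hPk⟩ := ih hPn
      exact ⟨k, Ico_subset_Ico_right n.le_succ hk, hPk⟩

section extProfile

variable {K : ℕ} {v : Fin (K + 1) → ℝ}

theorem extProfile_of_lt (k : Fin (K + 1)) : extProfile K v k = v k :=
  dif_pos k.isLt

theorem extProfile_of_gt {n : ℕ} (h : K < n) : extProfile K v n = 0 :=
  dif_neg (by omega)

end extProfile

namespace IsTwoChoiceProfile

variable {ρ : ℝ} {K : ℕ} {v : Fin (K + 1) → ℝ}

theorem antitone (hv : IsTwoChoiceProfile ρ K v) : Antitone (extProfile K v) := by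
  refine antitone_nat_of_succ_le fun n => ?_
  rcases lt_trichotomy n K with hn | rfl | hn
  · exact hv.2.1 n hn
  · rw [extProfile_of_gt n.lt_succ_self]
    exact hv.2.2.1
  · rw [extProfile_of_gt hn, extProfile_of_gt (hn.trans n.lt_succ_self)]

theorem nonneg (hv : IsTwoChoiceProfile ρ K v) (n : ℕ) : 0 ≤ extProfile K v n := by
  calc 0 = extProfile K v (max n (K + 1)) := (extProfile_of_gt (by omega)).symm
    _ ≤ extProfile K v n := hv.antitone (le_max_left _ _)

theorem sub_eq (hv : IsTwoChoiceProfile ρ K v) {i j : ℕ} (hij : i ≤ j) (hjK : j ≤ K) :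
    extProfile K v (i + 1) - extProfile K v (j + 1) =
      ρ * (extProfile K v i ^ 2 - extProfile K v j ^ 2) := by
  induction j, hij using Nat.le_induction with
  | base => ring
  | succ j hij ih =>
    have hstep := hv.2.2.2 (j + 1) (by omega) hjK
    rw [Nat.add_sub_cancel] at hstep
    linear_combination ih (by omega) + hstep

theorem extProfile_le_of_le {ρ' : ℝ} {v' : Fin (K + 1) → ℝ} (hρ : 0 ≤ ρ) (hρρ' : ρ ≤ ρ')
    (hv : IsTwoChoiceProfile ρ K v) (hv' : IsTwoChoiceProfile ρ' K v') (n : ℕ) :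
    extProfile K v n ≤ extProfile K v' n := by
  set f := extProfile K v
  set g := extProfile K v'
  by_contra! hn
  have hnK : n ≤ K := by
    by_contra! hKn
    simp only [f, g, extProfile_of_gt hKn, lt_irrefl] at hn
  have h0 : f 0 ≤ g 0 := (hv.1.trans hv'.1.symm).le
  have hK1 : f (K + 1) ≤ g (K + 1) := by
    simp only [f, g, extProfile_of_gt K.lt_succ_self, le_rfl]
  obtain ⟨a, ha, ha_le, ha_succ⟩ :=
    Nat.exists_mem_Ico_and_not_succ (P := fun k => f k ≤ g k) h0 (not_le.2 hn) n.zero_le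
  obtain ⟨b, hb, hb_lt, hb_succ⟩ := Nat.exists_mem_Ico_and_not_succ (P := fun k => ¬f k ≤ g k)
    (not_le.2 hn) (not_not.2 hK1) (by omega)
  simp only [mem_Ico, not_le] at ha hb ha_succ hb_lt hb_succ
  have hab : a ≤ b := by omega
  have hsq_a : f a ^ 2 ≤ g a ^ 2 := pow_le_pow_left₀ (hv.nonneg a) ha_le 2
  have hsq_b : g b ^ 2 ≤ f b ^ 2 := pow_le_pow_left₀ (hv'.nonneg b) hb_lt.le 2
  have hsq_g : g b ^ 2 ≤ g a ^ 2 := pow_le_pow_left₀ (hv'.nonneg b) (hv'.antitone hab) 2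
  have hdiff : f (a + 1) - f (b + 1) ≤ g (a + 1) - g (b + 1) :=
    calc f (a + 1) - f (b + 1) = ρ * (f a ^ 2 - f b ^ 2) := hv.sub_eq hab (by omega)
      _ ≤ ρ * (g a ^ 2 - g b ^ 2) := by gcongr
      _ ≤ ρ' * (g a ^ 2 - g b ^ 2) := by gcongr
      _ = g (a + 1) - g (b + 1) := (hv'.sub_eq hab (by omega)).symm
  linarith

end IsTwoChoiceProfile

theorem two_choice_profile_monotone_general (K : ℕ) (ρ ρ' : ℝ)
    (hρ : 0 < ρ) (hρρ' : ρ ≤ ρ')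
    (v v' : Fin (K + 1) → ℝ)
    (hv : IsTwoChoiceProfile ρ K v) (hv' : IsTwoChoiceProfile ρ' K v') :
    (∀ k : Fin (K + 1), v k ≤ v' k) ∧
    (∀ k : Fin (K + 1), nu ρ K k ≤ nu ρ' K k) := by
  have hmono {w w' : Fin (K + 1) → ℝ} (hw : IsTwoChoiceProfile ρ K w)
      (hw' : IsTwoChoiceProfile ρ' K w') (k : Fin (K + 1)) : w k ≤ w' k := by
    simpa only [extProfile_of_lt] using hw.extProfile_le_of_le hρ.le hρρ' hw' k
  exact ⟨hmono hv hv', hmono (Classical.epsilon_spec ⟨v, hv⟩)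
    (Classical.epsilon_spec ⟨v', hv'⟩)⟩

/-- monotonicity of the two-choice profile in ρ; in particular
 is nondecreasing. -/
theorem two_choice_profile_monotone (K : ℕ) (hK : 1 ≤ K) (ρ ρ' : ℝ)
    (hρ : 0 < ρ) (hρρ' : ρ ≤ ρ')
    (v v' : Fin (K + 1) → ℝ)
    (hv : IsTwoChoiceProfile ρ K v) (hv' : IsTwoChoiceProfile ρ' K v') :
    (∀ k : Fin (K + 1), v k ≤ v' k) ∧
    (∀ k : Fin (K + 1), nu ρ K k ≤ nu ρ' K k) :=
  two_choice_profile_monotone_general K ρ ρ' hρ hρρ' v v' hv hv'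
end
end

section
/- For every real ρ > 0, every β ∈ [0, 1], and every integer K ≥ 1, there exists exactly one vector (v_0, v_1, …, v_K) ∈ ℝ^{K+1} with 1 = v_0 ≥ v_1 ≥ … ≥ v_K ≥ 0 satisfying, with the convention v_{K+1} = 0, v_k − v_{k+1} = ρ(β(v_{k−1}² − v_k²) + (1 − β)(v_{k−1} − v_k)) for every 1 ≤ k ≤ K. -/
open Finset Real

noncomputable section

/-- `v` is an incentive profile for `(ρ, β, K)`: `1 = v_0 ≥ v_1 ≥ … ≥ v_K ≥ 0` and,
with the convention `v_{K+1} = 0`,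
`v_k − v_{k+1} = ρ(β(v_{k−1}² − v_k²) + (1 − β)(v_{k−1} − v_k))` for `1 ≤ k ≤ K`. -/
def IsIncentiveProfile (ρ β : ℝ) (K : ℕ) (v : Fin (K + 1) → ℝ) : Prop :=
  extProfile K v 0 = 1 ∧
  (∀ k < K, extProfile K v (k + 1) ≤ extProfile K v k) ∧
  0 ≤ extProfile K v K ∧
  ∀ k, 1 ≤ k → k ≤ K →
    extProfile K v k - extProfile K v (k + 1) =
      ρ * (β * ((extProfile K v (k - 1)) ^ 2 - (extProfile K v k) ^ 2) +
        (1 - β) * (extProfile K v (k - 1) - extProfile K v k))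

/-!
Writing `f x = ρ (β x² + (1 - β) x)`, the equations read `v_k - v_{k+1} = f v_{k-1} - f v_k`;
telescoping down from `v_{K+1} = 0` gives `v_{k+1} = f v_k - c` with `c = f v_K`. So a profile
is the orbit of `1` under `x ↦ f x - c` for a constant `c` that must equal `f` of the last term.
Shooting on `c` (with the orbit clipped at `0`, keeping it where `f` is monotone), the map
`c ↦ f (v_K(c)) - c` is continuous and changes sign on `[0, f 1]`, which gives existence; since
`v_K(c)` is antitone in `c`, two solutions `c ≤ c'` force `c' = f v_K(c') ≤ f v_K(c) = c`.
-/

def shoot (f : ℝ → ℝ) (c : ℝ) : ℕ → ℝ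
  | 0 => 1
  | k + 1 => max 0 (f (shoot f c k) - c)

section Shooting

variable {f : ℝ → ℝ}

theorem shoot_nonneg (f : ℝ → ℝ) (c : ℝ) : ∀ k, 0 ≤ shoot f c k
  | 0 => zero_le_one
  | _ + 1 => le_max_left _ _

theorem antitone_shoot (hf : MonotoneOn f (Set.Ici 0)) (k : ℕ) :
    Antitone fun c => shoot f c k := by
  intro c c' hcc'
  induction k with
  | zero => exact le_rfl
  | succ k ih =>
    have hfk := hf (shoot_nonneg f c' k) (shoot_nonneg f c k) ih
    exact max_le_max le_rfl (by linarith)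

theorem continuous_shoot (hf : Continuous f) (k : ℕ) : Continuous fun c => shoot f c k := by
  induction k with
  | zero => exact continuous_const
  | succ k ih => exact continuous_const.max ((hf.comp ih).sub continuous_id)

theorem shoot_le_one (hf : MonotoneOn f (Set.Ici 0)) {c : ℝ} (hc : f 1 ≤ c) :
    ∀ k, shoot f c k ≤ 1
  | 0 => le_rfl
  | k + 1 => by
    have hfk := hf (shoot_nonneg f c k) (zero_le_one' ℝ) (shoot_le_one hf hc k)
    exact max_le zero_le_one (by linarith)

theorem exists_map_shoot_eq (hf : Continuous f) (hmono : MonotoneOn f (Set.Ici 0)) (h0 : 0 ≤ f 0)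
    (K : ℕ) : ∃ c, f (shoot f c K) = c := by
  have hf1 : 0 ≤ f 1 := h0.trans (hmono Set.self_mem_Ici (zero_le_one' ℝ) zero_le_one)
  have hg : Continuous fun c => f (shoot f c K) - c :=
    (hf.comp (continuous_shoot hf K)).sub continuous_id
  have hg0 : 0 ≤ f (shoot f 0 K) - 0 := by
    simpa using h0.trans (hmono Set.self_mem_Ici (shoot_nonneg f 0 K) (shoot_nonneg f 0 K))
  have hg1 : f (shoot f (f 1) K) - f 1 ≤ 0 :=
    sub_nonpos.2 (hmono (shoot_nonneg f _ K) (zero_le_one' ℝ) (shoot_le_one hmono le_rfl K))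
  obtain ⟨c, -, hc⟩ := intermediate_value_Icc' hf1 hg.continuousOn ⟨hg1, hg0⟩
  exact ⟨c, sub_eq_zero.1 hc⟩

section Fixed

variable {c : ℝ} {K : ℕ}

theorem antitone_shoot_of_map_eq (hf : MonotoneOn f (Set.Ici 0)) (hfix : f (shoot f c K) = c) :
    Antitone (shoot f c) := by
  -- A first step up would keep the orbit above `1`, so `c = f v_K ≥ f 1 > c + 1`.
  have h1 : shoot f c 1 ≤ 1 := by
    by_contra! h
    have hlt : 1 < f 1 - c := by
      simpa [shoot, lt_max_iff, not_lt_of_ge zero_le_one] using h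
    have hge : ∀ k, 1 ≤ shoot f c k := by
      intro k
      induction k with
      | zero => exact le_rfl
      | succ k ih =>
        have := hf (zero_le_one' ℝ) (shoot_nonneg f c k) ih
        exact le_max_of_le_right (by linarith)
    have := hf (zero_le_one' ℝ) (shoot_nonneg f c K) (hge K)
    linarith
  refine antitone_nat_of_succ_le fun k => ?_
  induction k with
  | zero => exact h1
  | succ k ih =>
    have := hf (shoot_nonneg f c (k + 1)) (shoot_nonneg f c k) ih
    exact max_le_max le_rfl (by linarith)

theorem shoot_succ_of_map_eq (hf : MonotoneOn f (Set.Ici 0)) (hfix : f (shoot f c K) = c) {k : ℕ}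
    (hk : k ≤ K) : shoot f c (k + 1) = f (shoot f c k) - c := by
  have := hf (shoot_nonneg f c K) (shoot_nonneg f c k) (antitone_shoot_of_map_eq hf hfix hk)
  exact max_eq_right (by linarith)

end Fixed

end Shooting

def flux (ρ β x : ℝ) : ℝ := ρ * (β * x ^ 2 + (1 - β) * x)

theorem continuous_flux (ρ β : ℝ) : Continuous (flux ρ β) := by
  unfold flux; fun_prop

theorem monotoneOn_flux {ρ β : ℝ} (hρ : 0 ≤ ρ) (hβ : β ∈ Set.Icc (0 : ℝ) 1) :
    MonotoneOn (flux ρ β) (Set.Ici 0) := by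
  intro y (hy : 0 ≤ y) x _ hxy
  have : 0 ≤ ρ * ((x - y) * (β * (x + y) + (1 - β))) :=
    mul_nonneg hρ (mul_nonneg (by linarith) (by nlinarith [hβ.1, hβ.2]))
  unfold flux
  nlinarith

theorem extProfile_of_le (K : ℕ) (v : Fin (K + 1) → ℝ) {k : ℕ} (hk : k ≤ K) :
    extProfile K v k = v ⟨k, Nat.lt_succ_of_le hk⟩ := dif_pos _

theorem extProfile_succ_self (K : ℕ) (v : Fin (K + 1) → ℝ) : extProfile K v (K + 1) = 0 :=
  dif_neg (lt_irrefl _)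

section Profile

variable {ρ β : ℝ} {K : ℕ} {v : Fin (K + 1) → ℝ}

local notation "e" => extProfile K v

theorem isIncentiveProfile_iff :
    IsIncentiveProfile ρ β K v ↔ e 0 = 1 ∧ (∀ k < K, e (k + 1) ≤ e k) ∧ 0 ≤ e K ∧
      ∀ k ≤ K, e (k + 1) = flux ρ β (e k) - flux ρ β (e K) := by
  refine and_congr_right' <| and_congr_right' <| and_congr_right'
    ⟨fun h k hk => ?_, fun h k hk hkK => ?_⟩
  · induction hk using Nat.decreasingInduction with
    | self => simp [extProfile_succ_self]
    | of_succ k hk ih =>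
      have := h (k + 1) (Nat.le_add_left 1 k) hk
      simp only [add_tsub_cancel_right] at this
      unfold flux at ih ⊢
      linarith
  · obtain ⟨k, rfl⟩ := Nat.exists_eq_add_of_le' hk
    have h₁ := h k (by omega)
    have h₂ := h (k + 1) hkK
    simp only [add_tsub_cancel_right]
    unfold flux at h₁ h₂
    linear_combination h₁ - h₂

theorem IsIncentiveProfile.nonneg (hv : IsIncentiveProfile ρ β K v) {k : ℕ} (hk : k ≤ K) :
    0 ≤ e k := by
  induction hk using Nat.decreasingInduction with
  | self => exact hv.2.2.1
  | of_succ k hk ih => exact ih.trans (hv.2.1 k hk)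

theorem IsIncentiveProfile.eq_shoot (hv : IsIncentiveProfile ρ β K v) {k : ℕ} (hk : k ≤ K) :
    e k = shoot (flux ρ β) (flux ρ β (e K)) k := by
  induction k with
  | zero => exact hv.1
  | succ k ih =>
    rw [shoot, ← ih (by omega), ← (isIncentiveProfile_iff.1 hv).2.2.2 k (by omega)]
    exact (max_eq_right (hv.nonneg hk)).symm

theorem IsIncentiveProfile.unique (hf : MonotoneOn (flux ρ β) (Set.Ici 0))
    {w : Fin (K + 1) → ℝ} (hv : IsIncentiveProfile ρ β K v) (hw : IsIncentiveProfile ρ β K w) : v = w := by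
  have key : ∀ {u u' : Fin (K + 1) → ℝ}, IsIncentiveProfile ρ β K u →
      IsIncentiveProfile ρ β K u' → flux ρ β (extProfile K u K) ≤ flux ρ β (extProfile K u' K) →
      flux ρ β (extProfile K u' K) ≤ flux ρ β (extProfile K u K) := by
    intro u u' hu hu' h
    rw [hu.eq_shoot le_rfl, hu'.eq_shoot le_rfl]
    exact hf (shoot_nonneg _ _ K) (shoot_nonneg _ _ K) (antitone_shoot hf K h)
  have hc : flux ρ β (e K) = flux ρ β (extProfile K w K) := by
    rcases le_total (flux ρ β (e K)) (flux ρ β (extProfile K w K)) with h | h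
    · exact le_antisymm h (key hv hw h)
    · exact le_antisymm (key hw hv h) h
  funext i
  have hi : (i : ℕ) ≤ K := Nat.lt_succ_iff.mp i.isLt
  have : e i = extProfile K w i := by rw [hv.eq_shoot hi, hc, ← hw.eq_shoot hi]
  rwa [extProfile_of_le K v hi, extProfile_of_le K w hi] at this

theorem isIncentiveProfile_shoot {c : ℝ} (hf : MonotoneOn (flux ρ β) (Set.Ici 0))
    (hfix : flux ρ β (shoot (flux ρ β) c K) = c) :
    IsIncentiveProfile ρ β K (fun i => shoot (flux ρ β) c i) := by
  have he : ∀ k ≤ K, extProfile K (fun i => shoot (flux ρ β) c i) k = shoot (flux ρ β) c k :=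
    fun k hk => extProfile_of_le K _ hk
  refine isIncentiveProfile_iff.2 ⟨he 0 K.zero_le, fun k hk => ?_, ?_, fun k hk => ?_⟩
  · rw [he k hk.le, he (k + 1) hk]
    exact antitone_shoot_of_map_eq hf hfix k.le_succ
  · rw [he K le_rfl]
    exact shoot_nonneg _ _ K
  · rw [he K le_rfl, he k hk, hfix]
    rcases hk.lt_or_eq with hk | rfl
    · rw [he (k + 1) hk, shoot_succ_of_map_eq hf hfix hk.le]
    · rw [extProfile_succ_self, hfix, sub_self]

end Profile

theorem incentive_profile_exists_unique_general (ρ : ℝ) (hρ : 0 < ρ)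
    (β : ℝ) (hβ : β ∈ Set.Icc (0 : ℝ) 1) (K : ℕ) :
    ∃! v : Fin (K + 1) → ℝ, IsIncentiveProfile ρ β K v := by
  have hf := monotoneOn_flux hρ.le hβ
  obtain ⟨c, hc⟩ := exists_map_shoot_eq (continuous_flux ρ β) hf (by simp [flux]) K
  have hv := isIncentiveProfile_shoot hf hc
  exact ⟨_, hv, fun w hw => (hv.unique hf hw).symm⟩

/-- for every `ρ > 0`, `β ∈ [0,1]`, `K ≥ 1`, there is exactly one
incentive profile for `(ρ, β, K)`. -/
theorem incentive_profile_exists_unique (ρ : ℝ) (hρ : 0 < ρ)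
    (β : ℝ) (hβ : β ∈ Set.Icc (0 : ℝ) 1) (K : ℕ) (hK : 1 ≤ K) :
    ∃! v : Fin (K + 1) → ℝ, IsIncentiveProfile ρ β K v :=
  incentive_profile_exists_unique_general ρ hρ β hβ K
end
end

section
/- Let K ≥ 1 be an integer, let 0 < ρ < 1 and set S(ρ, K) := Σ_{k=1}^{K} ρ^{2^k − 1}. Then the unique two-choice profile for (ρ, K) satisfies S(ρ, K) − 2^{K+1} ρ^{2^{K+1} − 1} ≤ Σ_{k=1}^{K} ν_{ρ,K}(k) ≤ S(ρ, K). -/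
open Finset Real

noncomputable section

/-!
Summing the recurrence from `k` to `K` telescopes to `v_k = ρ (v_{k-1}² - v_K²)`. Dropping
`v_K²` gives `v_k ≤ ρ v_{k-1}²`, hence `v_k ≤ u_k := ρ^(2^k - 1)`, the solution of
`u_k = ρ u_{k-1}²`, `u_0 = 1`. Conversely, since `ρ (u² - w²) ≤ 2 (u - w)` for
`w ≤ u ≤ 1`, the gap `e_k = u_k - v_k` satisfies
`e_k ≤ 2 e_{k-1} + ρ v_K² ≤ 2 e_{k-1} + ρ^(2^(K+1) - 1)`, so
`e_k ≤ (2^k - 1) ρ^(2^(K+1) - 1)`; summing over `k` gives the lower bound.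
-/

lemma pow_two_pow_succ_sub_one {M : Type*} [Monoid M] (a : M) (k : ℕ) :
    a ^ (2 ^ (k + 1) - 1) = a * (a ^ (2 ^ k - 1)) ^ 2 := by
  rw [← pow_mul, ← pow_succ']
  have : 1 ≤ 2 ^ k := Nat.one_le_two_pow
  congr 1
  omega

lemma mul_sq_sub_sq_le_two_mul_sub {R : Type*} [CommRing R] [LinearOrder R] [IsStrictOrderedRing R]
    {ρ u w : R} (hρ0 : 0 ≤ ρ) (hρ1 : ρ ≤ 1) (hwu : w ≤ u) (hu : u ≤ 1) :
    ρ * (u ^ 2 - w ^ 2) ≤ 2 * (u - w) := by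
  have hsum : ρ * (u + w) ≤ 2 := by nlinarith
  calc ρ * (u ^ 2 - w ^ 2) = ρ * (u + w) * (u - w) := by ring
    _ ≤ 2 * (u - w) := mul_le_mul_of_nonneg_right hsum (sub_nonneg.mpr hwu)

lemma sum_Icc_two_pow_sub_one_le (K : ℕ) :
    ∑ k ∈ Icc 1 K, ((2 : ℝ) ^ k - 1) ≤ 2 ^ (K + 1) := by
  induction K with
  | zero => simp
  | succ K ih =>
    rw [sum_Icc_succ_top (by omega), pow_succ 2 (K + 1)]
    linarith [pow_pos (two_pos : (0 : ℝ) < 2) (K + 1)]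

namespace IsTwoChoiceProfile

variable {ρ : ℝ} {K : ℕ} {v : Fin (K + 1) → ℝ}

lemma extProfile_nonneg (hv : IsTwoChoiceProfile ρ K v) {k : ℕ} (hk : k ≤ K) :
    0 ≤ extProfile K v k := by
  induction hk using Nat.decreasingInduction with
  | self => exact hv.2.2.1
  | of_succ k hk ih => exact ih.trans (hv.2.1 k hk)

lemma extProfile_eq_mul_sq_sub_sq (hv : IsTwoChoiceProfile ρ K v) {k : ℕ}
    (hk1 : 1 ≤ k) (hkK : k ≤ K) :
    extProfile K v k = ρ * (extProfile K v (k - 1) ^ 2 - extProfile K v K ^ 2) := by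
  -- The recurrence says that `v_j - ρ v_{j-1}²` does not depend on `1 ≤ j ≤ K + 1`.
  have hconst : ∀ j, k ≤ j → j ≤ K + 1 →
      extProfile K v j - ρ * extProfile K v (j - 1) ^ 2 =
        extProfile K v k - ρ * extProfile K v (k - 1) ^ 2 := by
    intro j hkj
    induction j, hkj using Nat.le_induction with
    | base => exact fun _ ↦ rfl
    | succ j hkj ih =>
      intro hj
      have hrec := hv.2.2.2 j (by omega) (by omega)
      rw [← ih (by omega), Nat.add_sub_cancel]
      linarith
  have hend : extProfile K v (K + 1) = 0 := by simp [extProfile]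
  have := hconst (K + 1) (by omega) le_rfl
  rw [hend, Nat.add_sub_cancel] at this
  linarith

lemma extProfile_le_pow (hv : IsTwoChoiceProfile ρ K v) (hρ : 0 ≤ ρ) {k : ℕ} (hk : k ≤ K) :
    extProfile K v k ≤ ρ ^ (2 ^ k - 1) := by
  induction k with
  | zero => simp [hv.1]
  | succ k ih =>
    have hsq : extProfile K v k ^ 2 ≤ (ρ ^ (2 ^ k - 1)) ^ 2 :=
      pow_le_pow_left₀ (hv.extProfile_nonneg (by omega)) (ih (by omega)) 2
    rw [hv.extProfile_eq_mul_sq_sub_sq (by omega) hk, Nat.add_sub_cancel, pow_two_pow_succ_sub_one]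
    nlinarith [sq_nonneg (extProfile K v K)]

lemma pow_sub_extProfile_le (hv : IsTwoChoiceProfile ρ K v) (hρ0 : 0 ≤ ρ) (hρ1 : ρ ≤ 1)
    {k : ℕ} (hk : k ≤ K) :
    ρ ^ (2 ^ k - 1) - extProfile K v k ≤ ((2 : ℝ) ^ k - 1) * ρ ^ (2 ^ (K + 1) - 1) := by
  induction k with
  | zero => simp [hv.1]
  | succ k ih =>
    have hgap : ρ * ((ρ ^ (2 ^ k - 1)) ^ 2 - extProfile K v k ^ 2) ≤
        2 * (ρ ^ (2 ^ k - 1) - extProfile K v k) :=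
      mul_sq_sub_sq_le_two_mul_sub hρ0 hρ1 (hv.extProfile_le_pow hρ0 (by omega)) (pow_le_one₀ hρ0 hρ1)
    have hlast : ρ * extProfile K v K ^ 2 ≤ ρ ^ (2 ^ (K + 1) - 1) := by
      rw [pow_two_pow_succ_sub_one]
      gcongr
      exacts [hv.extProfile_nonneg le_rfl, hv.extProfile_le_pow hρ0 le_rfl]
    have hdouble : ((2 : ℝ) ^ (k + 1) - 1) * ρ ^ (2 ^ (K + 1) - 1) =
        2 * (((2 : ℝ) ^ k - 1) * ρ ^ (2 ^ (K + 1) - 1)) + ρ ^ (2 ^ (K + 1) - 1) := by ring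
    rw [hv.extProfile_eq_mul_sq_sub_sq (by omega) hk, Nat.add_sub_cancel,
      pow_two_pow_succ_sub_one, hdouble]
    linarith [ih (by omega)]

end IsTwoChoiceProfile

theorem sum_profile_bounds_subcritical_general (K : ℕ) (ρ : ℝ)
    (hρ0 : 0 < ρ) (hρ1 : ρ < 1)
    (v : Fin (K + 1) → ℝ) (hv : IsTwoChoiceProfile ρ K v) :
    (∑ k ∈ Finset.Icc 1 K, ρ ^ (2 ^ k - 1)) - (2 : ℝ) ^ (K + 1) * ρ ^ (2 ^ (K + 1) - 1) ≤
      ∑ k ∈ Finset.Icc 1 K, extProfile K v k ∧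
    ∑ k ∈ Finset.Icc 1 K, extProfile K v k ≤ ∑ k ∈ Finset.Icc 1 K, ρ ^ (2 ^ k - 1) := by
  constructor
  · have hgaps : ∑ k ∈ Icc 1 K, (ρ ^ (2 ^ k - 1) - extProfile K v k) ≤
        ∑ k ∈ Icc 1 K, ((2 : ℝ) ^ k - 1) * ρ ^ (2 ^ (K + 1) - 1) :=
      sum_le_sum fun k hk ↦
        hv.pow_sub_extProfile_le hρ0.le hρ1.le (mem_Icc.mp hk).2
    rw [sum_sub_distrib, ← sum_mul] at hgaps
    have := mul_le_mul_of_nonneg_right (sum_Icc_two_pow_sub_one_le K)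
      (pow_nonneg hρ0.le (2 ^ (K + 1) - 1))
    linarith
  · exact sum_le_sum fun k hk ↦ hv.extProfile_le_pow hρ0.le (mem_Icc.mp hk).2

/-- for `0 < ρ < 1` and `S(ρ,K) = Σ_{k=1}^K ρ^{2^k − 1}`,
`S(ρ,K) − 2^{K+1} ρ^{2^{K+1} − 1} ≤ Σ_{k=1}^K ν_{ρ,K}(k) ≤ S(ρ,K)`. -/
theorem sum_profile_bounds_subcritical (K : ℕ) (hK : 1 ≤ K) (ρ : ℝ)
    (hρ0 : 0 < ρ) (hρ1 : ρ < 1)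
    (v : Fin (K + 1) → ℝ) (hv : IsTwoChoiceProfile ρ K v) :
    (∑ k ∈ Finset.Icc 1 K, ρ ^ (2 ^ k - 1)) - (2 : ℝ) ^ (K + 1) * ρ ^ (2 ^ (K + 1) - 1) ≤
      ∑ k ∈ Finset.Icc 1 K, extProfile K v k ∧
    ∑ k ∈ Finset.Icc 1 K, extProfile K v k ≤ ∑ k ∈ Finset.Icc 1 K, ρ ^ (2 ^ k - 1) :=
  sum_profile_bounds_subcritical_general K ρ hρ0 hρ1 v hv
end
end
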